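/- arXiv:1709.00588 — 6 statements merged into one kernel-verified Lean document; each statement's English description precedes it below -/
import Mathlib

section
/- Let A be a random s×t matrix over F_q and B an independent totally random t×m matrix over F_q. Conditional on rank(A) = n, the matrix AB has the same rank distribution as a totally random n×m matrix over F_q. -/
open scoped Classical


noncomputable def preimageEquivAux {M N : Type*} [AddCommGroup M] [AddCommGroup N]
    (φ : M →+ N) (hφ : Function.Surjective φ) (S : Set N) :
    (φ ⁻¹' S) ≃ S × (φ ⁻¹' ({0} : Set N)) where
  toFun b := (⟨φ b.1, b.2⟩, ⟨b.1 - Function.surjInv hφ (φ b.1), by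
    simp [Set.mem_preimage, map_sub, Function.surjInv_eq hφ]⟩)
  invFun p := ⟨Function.surjInv hφ p.1.1 + p.2.1, by
    have h2 : φ p.2.1 = 0 := p.2.2
    simp [Set.mem_preimage, map_add, h2, Function.surjInv_eq hφ, p.1.2]⟩
  left_inv b := by
    apply Subtype.ext
    simp
  right_inv p := by
    have h2 : φ p.2.1 = 0 := p.2.2
    have h1 : φ (Function.surjInv hφ p.1.1 + p.2.1) = p.1.1 := by
      simp [map_add, h2, Function.surjInv_eq hφ]
    refine Prod.ext (Subtype.ext ?_) (Subtype.ext ?_) <;> simp [h1]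

lemma uniform_toOuterMeasure_apply (α : Type*) [Fintype α] [Nonempty α] (S : Set α) :
    (PMF.uniformOfFintype α).toOuterMeasure S
      = (Fintype.card S : ENNReal) * ((Fintype.card α : ENNReal))⁻¹ := by
  rw [PMF.toOuterMeasure_apply, tsum_fintype]
  have h : ∀ x : α, S.indicator (PMF.uniformOfFintype α) x
      = if x ∈ S.toFinset then ((Fintype.card α : ENNReal))⁻¹ else 0 := by
    intro x
    by_cases hx : x ∈ S <;> simp [Set.indicator, hx, PMF.uniformOfFintype_apply]
  simp_rw [h]
  rw [Finset.sum_ite_mem, Finset.univ_inter, Finset.sum_const, Set.toFinset_card,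
    nsmul_eq_mul]

lemma uniform_preimage_hom {M N : Type*} [AddCommGroup M] [AddCommGroup N]
    [Fintype M] [Fintype N] (φ : M →+ N) (hφ : Function.Surjective φ) (S : Set N) :
    (PMF.uniformOfFintype M).toOuterMeasure (φ ⁻¹' S)
      = (PMF.uniformOfFintype N).toOuterMeasure S := by
  classical
  have : Nonempty M := ⟨0⟩
  have : Nonempty N := ⟨0⟩
  rw [uniform_toOuterMeasure_apply, uniform_toOuterMeasure_apply]
  set K := (φ ⁻¹' ({0} : Set N)) with hKdef
  have hc1 : Fintype.card (φ ⁻¹' S) = Fintype.card S * Fintype.card K :=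
    (Fintype.card_congr (preimageEquivAux φ hφ S)).trans (Fintype.card_prod _ _)
  have hc2 : Fintype.card M = Fintype.card N * Fintype.card K := by
    have e1 : M ≃ (φ ⁻¹' (Set.univ : Set N)) :=
      (Equiv.Set.univ M).symm.trans (Equiv.setCongr (by simp))
    have := (Fintype.card_congr (e1.trans ((preimageEquivAux φ hφ Set.univ).trans
      (Equiv.prodCongr (Equiv.Set.univ N) (Equiv.refl _))))).trans (Fintype.card_prod _ _)
    simpa [hKdef] using this
  have hK0 : (Fintype.card K : ENNReal) ≠ 0 := by
    have h0 : (0 : M) ∈ K := by simp [hKdef]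
    haveI : Nonempty K := ⟨⟨0, h0⟩⟩
    exact_mod_cast Fintype.card_ne_zero
  have hKtop : (Fintype.card K : ENNReal) ≠ ⊤ := ENNReal.natCast_ne_top _
  rw [hc1, hc2]
  push_cast
  rw [← div_eq_mul_inv, ← div_eq_mul_inv,
    ENNReal.mul_div_mul_right _ _ hK0 hKtop]


lemma key_rank {F : Type*} [Field F] [Fintype F] [DecidableEq F]
    {s t m n : ℕ} (a : Matrix (Fin s) (Fin t) F) (ha : a.rank = n) (r : ℕ) :
    (PMF.uniformOfFintype (Matrix (Fin t) (Fin m) F)).toOuterMeasure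
        {b | (a * b).rank = r}
      = (PMF.uniformOfFintype (Matrix (Fin n) (Fin m) F)).toOuterMeasure
        {C | C.rank = r} := by
  classical
  set f := a.mulVecLin with hf
  have hfin : Module.finrank F (LinearMap.range f) = n := ha
  obtain ⟨e⟩ : Nonempty ((LinearMap.range f) ≃ₗ[F] (Fin n → F)) :=
    FiniteDimensional.nonempty_linearEquiv_of_finrank_eq
      (by rw [hfin, Module.finrank_fin_fun])
  set R : (Fin t → F) →ₗ[F] (Fin n → F) := (e : _ →ₗ[F] _) ∘ₗ f.rangeRestrict with hR
  have hRsurj : Function.Surjective R := e.surjective.comp f.surjective_rangeRestrict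
  set L : (Fin n → F) →ₗ[F] (Fin s → F) :=
    (LinearMap.range f).subtype ∘ₗ (e.symm : _ →ₗ[F] _) with hL
  have hLinj : Function.Injective L :=
    (LinearMap.range f).injective_subtype.comp e.symm.injective
  have hLR : L ∘ₗ R = f := by
    ext x
    simp [hL, hR]
  set R' : Matrix (Fin n) (Fin t) F := LinearMap.toMatrix' R with hR'
  set L' : Matrix (Fin s) (Fin n) F := LinearMap.toMatrix' L with hL'
  have hR'm : R'.mulVecLin = R := by
    rw [hR', ← Matrix.toLin'_apply', Matrix.toLin'_toMatrix']
  have hL'm : L'.mulVecLin = L := by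
    rw [hL', ← Matrix.toLin'_apply', Matrix.toLin'_toMatrix']
  have ha' : a = L' * R' := by
    apply Matrix.toLin'.injective
    rw [Matrix.toLin'_apply', Matrix.toLin'_apply', Matrix.mulVecLin_mul, hR'm, hL'm, hLR]
  -- rank (a * b) = rank (R' * b)
  have hrank : ∀ b : Matrix (Fin t) (Fin m) F, (a * b).rank = (R' * b).rank := by
    intro b
    have h1 : (a * b).mulVecLin = L ∘ₗ (R' * b).mulVecLin := by
      rw [ha', Matrix.mul_assoc, Matrix.mulVecLin_mul, hL'm]
    unfold Matrix.rank
    rw [h1, LinearMap.range_comp]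
    exact (Submodule.equivMapOfInjective L hLinj _).finrank_eq.symm
  -- the additive hom
  set φ : Matrix (Fin t) (Fin m) F →+ Matrix (Fin n) (Fin m) F :=
    { toFun := fun b => R' * b
      map_zero' := by simp
      map_add' := fun x y => by simp [Matrix.mul_add] } with hφdef
  have hφsurj : Function.Surjective φ := by
    obtain ⟨g, hg⟩ := R.exists_rightInverse_of_surjective (LinearMap.range_eq_top.mpr hRsurj)
    set G' : Matrix (Fin t) (Fin n) F := LinearMap.toMatrix' g with hG'
    have hRG : R' * G' = 1 := by
      apply Matrix.toLin'.injective
      rw [Matrix.toLin'_apply', Matrix.mulVecLin_mul, hR'm]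
      rw [hG', ← Matrix.toLin'_apply', Matrix.toLin'_toMatrix']
      simpa using hg
    intro C
    exact ⟨G' * C, by simp [hφdef, ← Matrix.mul_assoc, hRG]⟩
  have hset : {b : Matrix (Fin t) (Fin m) F | (a * b).rank = r}
      = φ ⁻¹' {C | C.rank = r} := by
    ext b
    simp [hφdef, hrank b]
  rw [hset]
  exact uniform_preimage_hom φ hφsurj _


lemma pmf_om_univ {α : Type*} (p : PMF α) : p.toOuterMeasure Set.univ = 1 := by
  rw [PMF.toOuterMeasure_apply]
  simp [p.tsum_coe]

lemma pmf_om_empty {α : Type*} (p : PMF α) : p.toOuterMeasure ∅ = 0 := by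
  rw [PMF.toOuterMeasure_apply]
  simp

/-- Let `A` be a random `s × t` matrix over `F_q` (arbitrary distribution) and
`B` an independent totally random `t × m` matrix.  Conditional on
`rank A = n` (an event of positive probability), the rank of `A * B` has the
same distribution as the rank of a totally random `n × m` matrix over `F_q`. -/
theorem cond_rank_mul_eq_rank_uniform
    {F : Type*} [Field F] [Fintype F] [DecidableEq F]
    (s t m n : ℕ) (A : PMF (Matrix (Fin s) (Fin t) F))
    (joint : PMF (Matrix (Fin s) (Fin t) F × Matrix (Fin t) (Fin m) F))
    (hjoint : joint =
      A.bind fun a =>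
        (PMF.uniformOfFintype (Matrix (Fin t) (Fin m) F)).map fun b => (a, b))
    (hpos : joint.toOuterMeasure {p | p.1.rank = n} ≠ 0) :
    ∀ r : ℕ,
      joint.toOuterMeasure {p | (p.1 * p.2).rank = r ∧ p.1.rank = n} /
          joint.toOuterMeasure {p | p.1.rank = n} =
        (PMF.uniformOfFintype (Matrix (Fin n) (Fin m) F)).toOuterMeasure
          {B | B.rank = r} := by
  intro r
  subst hjoint
  set U := PMF.uniformOfFintype (Matrix (Fin t) (Fin m) F) with hU
  have hbind : ∀ S : Set (Matrix (Fin s) (Fin t) F × Matrix (Fin t) (Fin m) F),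
      (A.bind fun a => U.map fun b => (a, b)).toOuterMeasure S
        = ∑' a', A a' * U.toOuterMeasure ((fun b => (a', b)) ⁻¹' S) := by
    intro S
    rw [PMF.toOuterMeasure_bind_apply]
    simp_rw [PMF.toOuterMeasure_map_apply]
  set c : ENNReal :=
    (PMF.uniformOfFintype (Matrix (Fin n) (Fin m) F)).toOuterMeasure {B | B.rank = r} with hc
  have hD : (A.bind fun a => U.map fun b => (a, b)).toOuterMeasure {p | p.1.rank = n}
      = ∑' a', A a' * (if a'.rank = n then (1 : ENNReal) else 0) := by
    rw [hbind]
    refine tsum_congr fun a' => ?_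
    congr 1
    by_cases h : a'.rank = n
    · have : ((fun b => (a', b)) ⁻¹' {p : Matrix (Fin s) (Fin t) F × Matrix (Fin t) (Fin m) F | p.1.rank = n}) = Set.univ := by
        ext b; simp [h]
      rw [this, pmf_om_univ, if_pos h]
    · have : ((fun b => (a', b)) ⁻¹' {p : Matrix (Fin s) (Fin t) F × Matrix (Fin t) (Fin m) F | p.1.rank = n}) = ∅ := by
        ext b; simp [h]
      rw [this, pmf_om_empty, if_neg h]
  have hN : (A.bind fun a => U.map fun b => (a, b)).toOuterMeasure
        {p | (p.1 * p.2).rank = r ∧ p.1.rank = n}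
      = ∑' a', A a' * ((if a'.rank = n then (1 : ENNReal) else 0) * c) := by
    rw [hbind]
    refine tsum_congr fun a' => ?_
    congr 1
    by_cases h : a'.rank = n
    · have hpre : ((fun b => (a', b)) ⁻¹' {p : Matrix (Fin s) (Fin t) F × Matrix (Fin t) (Fin m) F | (p.1 * p.2).rank = r ∧ p.1.rank = n})
          = {b | (a' * b).rank = r} := by
        ext b; simp [h]
      rw [hpre, if_pos h, one_mul, hU, hc]
      exact key_rank a' h r
    · have hpre : ((fun b => (a', b)) ⁻¹' {p : Matrix (Fin s) (Fin t) F × Matrix (Fin t) (Fin m) F | (p.1 * p.2).rank = r ∧ p.1.rank = n})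
          = ∅ := by
        ext b; simp [h]
      rw [hpre, pmf_om_empty, if_neg h, zero_mul]
  rw [hD] at hpos
  rw [hN, hD]
  simp_rw [← mul_assoc]
  rw [ENNReal.tsum_mul_right]
  set D : ENNReal := ∑' a', A a' * (if a'.rank = n then (1 : ENNReal) else 0) with hDdef
  have hDtop : D ≠ ⊤ := by
    have hle : D ≤ ∑' a', A a' := by
      refine ENNReal.tsum_le_tsum fun a' => ?_
      by_cases h : a'.rank = n <;> simp [h]
    rw [A.tsum_coe] at hle
    exact (hle.trans_lt ENNReal.one_lt_top).ne
  rw [mul_comm D c, div_eq_mul_inv, mul_assoc, ← div_eq_mul_inv,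
    ENNReal.div_self (hDdef ▸ hpos) hDtop, mul_one]
end

section
/- Fix a prime power q, integers M ≥ 1, t ≥ 1, ε ∈ [0,1], and let f(n) = C(t,n)(1-ε)^n ε^{t-n}. Define the (M+1)×(M+1) lower-triangular transition matrix P with entries P_{m+1,j+1} = Σ_{n=j}^{t} f(n) ζ_j^{m,n} for 0 ≤ j ≤ m ≤ M (using the convention P_{m+1,1} counts j = 0), and 0 above the diagonal. Define Q with q_{i,j} = 0 if i < j, q_{i,1} = 1, and q_{i,j} = ζ_{j-1}^{i-1} otherwise, and the diagonal matrix Λ with λ_1 = 1 and λ_j = Σ_{n=j-1}^{t} f(n) ζ_{j-1}^{j-1,n} for 2 ≤ j ≤ M+1. Then P = Q Λ Q^{-1}; equivalently P Q = Q Λ, and Q is invertible. -/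
open scoped Classical

/-- `ζ_r^n = ∏_{i=0}^{r-1} (1 - q^{-n+i})`, `ζ_0^n = 1`. -/
noncomputable def zeta (q : ℝ) (r n : ℕ) : ℝ :=
  ∏ i ∈ Finset.range r, (1 - q ^ ((i : ℤ) - (n : ℤ)))

/-- `ζ_r^{m,n} = ζ_r^n ζ_r^m / (ζ_r^r q^{(n-r)(m-r)})`. -/
noncomputable def zeta2 (q : ℝ) (r m n : ℕ) : ℝ :=
  zeta q r n * zeta q r m / (zeta q r r * q ^ (((n : ℤ) - r) * ((m : ℤ) - r)))

variable {q : ℝ}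
lemma zeta_zero (n : ℕ) : zeta q 0 n = 1 := by simp [zeta]
lemma zeta_succ (r n : ℕ) : zeta q (r+1) n = zeta q r n * (1 - q ^ ((r:ℤ) - (n:ℤ))) := by
  simp [zeta, Finset.prod_range_succ]
lemma zeta_succ' (r n : ℕ) : zeta q (r+1) (n+1) = (1 - q ^ (-(n:ℤ)-1)) * zeta q r n := by
  rw [zeta, Finset.prod_range_succ', mul_comm]
  congr 1
  · push_cast; ring_nf
  · exact Finset.prod_congr rfl fun i _ => by congr 1; push_cast; ring_nf
lemma zeta_eq_zero {r n : ℕ} (h : n < r) : zeta q r n = 0 := by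
  apply Finset.prod_eq_zero (Finset.mem_range.mpr h); simp
lemma zeta_pos (hq : 1 < q) {r n : ℕ} (h : r ≤ n) : 0 < zeta q r n := by
  apply Finset.prod_pos
  intro i hi
  have hi' : (i:ℤ) - (n:ℤ) < 0 := by have := Finset.mem_range.mp hi; omega
  have : q ^ ((i:ℤ) - (n:ℤ)) < 1 := zpow_lt_one_of_neg₀ hq hi'
  linarith
lemma one_sub_zpow_ne (hq : 1 < q) {z : ℤ} (hz : z < 0) : 1 - q ^ z ≠ 0 := by
  have : q ^ z < 1 := zpow_lt_one_of_neg₀ hq hz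
  linarith
lemma zeta2_eq_zero {k m n : ℕ} (h : n < k) : zeta2 q k m n = 0 := by
  rw [zeta2, zeta_eq_zero h, zero_mul, zero_div]
lemma zeta2_zero_left (hq : 1 < q) (i n : ℕ) :
    zeta2 q 0 i (n+1) = q ^ (-(i:ℤ)) * zeta2 q 0 i n := by
  have hq0 : q ≠ 0 := by positivity
  simp only [zeta2, zeta_zero]
  push_cast
  rw [show ((n:ℤ)+1-0) * ((i:ℤ)-0) = (i:ℤ) + (n:ℤ)*(i:ℤ) by ring,
     show ((n:ℤ)-0)*((i:ℤ)-0) = (n:ℤ)*(i:ℤ) by ring, zpow_add₀ hq0, zpow_neg]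
  have h1 : q ^ ((i:ℤ)) ≠ 0 := zpow_ne_zero _ hq0
  have h2 : q ^ ((n:ℤ)*(i:ℤ)) ≠ 0 := zpow_ne_zero _ hq0
  field_simp
lemma zeta2_rec (hq : 1 < q) (r i n : ℕ) :
    zeta2 q (r+1) i (n+1)
      = q ^ ((r:ℤ)+1-(i:ℤ)) * zeta2 q (r+1) i n
        + (1 - q ^ ((r:ℤ)-(i:ℤ))) * zeta2 q r i n := by
  have hq0 : q ≠ 0 := by positivity
  have hZr : zeta q r r ≠ 0 := ne_of_gt (zeta_pos hq le_rfl)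
  have hw : 1 - q ^ (-(r:ℤ)-1) ≠ 0 := one_sub_zpow_ne hq (by omega)
  simp only [zeta2, zeta_succ' r n, zeta_succ' r r, zeta_succ r i, zeta_succ r n]
  push_cast
  rw [show ((n:ℤ)+1-((r:ℤ)+1)) * ((i:ℤ)-((r:ℤ)+1))
        = ((n:ℤ)-r)*((i:ℤ)-r) + ((r:ℤ)-n) by ring,
      show ((n:ℤ)-((r:ℤ)+1)) * ((i:ℤ)-((r:ℤ)+1))
        = ((n:ℤ)-r)*((i:ℤ)-r) + ((r:ℤ)-n) + ((r:ℤ)-i) + 1 by ring,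
      show (r:ℤ)+1-(i:ℤ) = ((r:ℤ)-i) + 1 by ring,
      show -(n:ℤ)-1 = ((r:ℤ)-n) + (-(r:ℤ)-1) by ring]
  simp only [zpow_add₀ hq0, zpow_one]
  have hA : q ^ (((n:ℤ)-r)*((i:ℤ)-r)) ≠ 0 := zpow_ne_zero _ hq0
  have hu : q ^ ((r:ℤ)-n) ≠ 0 := zpow_ne_zero _ hq0
  have hv : q ^ ((r:ℤ)-i) ≠ 0 := zpow_ne_zero _ hq0
  field_simp
  ring
lemma zpow_mul_zpow (hq0 : q ≠ 0) {a b c : ℤ} (h : a + b = c) :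
    q ^ a * q ^ b = q ^ c := by rw [← zpow_add₀ hq0, h]
lemma id1 (hq : 1 < q) (r k i : ℕ) :
    zeta q (r+1) k * q ^ ((k:ℤ)-(i:ℤ)) + zeta q (r+1) (k+1) * (1 - q ^ ((k:ℤ)-(i:ℤ)))
      = q ^ (-(r:ℤ)-1) * zeta q (r+1) k
        + (1 - q ^ (-(r:ℤ)-1)) * (1 - q ^ ((r:ℤ)-(i:ℤ))) * zeta q r k := by
  have hq0 : q ≠ 0 := by positivity
  rw [zeta_succ r k, zeta_succ' r k]
  have h1 : q ^ ((k:ℤ)-i) * q ^ ((r:ℤ)-k) = q ^ ((r:ℤ)-i) := zpow_mul_zpow hq0 (by ring)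
  have h2 : q ^ ((k:ℤ)-i) * q ^ (-(k:ℤ)-1) = q ^ (-(i:ℤ)-1) := zpow_mul_zpow hq0 (by ring)
  have h3 : q ^ (-(r:ℤ)-1) * q ^ ((r:ℤ)-k) = q ^ (-(k:ℤ)-1) := zpow_mul_zpow hq0 (by ring)
  have h4 : q ^ (-(r:ℤ)-1) * q ^ ((r:ℤ)-i) = q ^ (-(i:ℤ)-1) := zpow_mul_zpow hq0 (by ring)
  linear_combination (-(zeta q r k))*h1 + (zeta q r k)*h2 + (zeta q r k)*h3 - (zeta q r k)*h4
lemma id2 (hq : 1 < q) (r i n : ℕ) :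
    q ^ (-(r:ℤ)-1) * zeta q (r+1) i * zeta q (r+1) n
      + (1 - q ^ (-(r:ℤ)-1)) * (1 - q ^ ((r:ℤ)-(i:ℤ))) * zeta q r i * zeta q r n
      = zeta q (r+1) i * zeta q (r+1) (n+1) := by
  have hq0 : q ≠ 0 := by positivity
  rw [zeta_succ r i, zeta_succ r n, zeta_succ' r n,
    show -(n:ℤ)-1 = (-(r:ℤ)-1) + ((r:ℤ)-n) by ring, zpow_add₀ hq0]
  ring


noncomputable def Af (q : ℝ) (r m n k : ℕ) : ℝ :=
  zeta q (r+1) k * q ^ ((k:ℤ) - ((m+1 : ℕ) : ℤ)) * zeta2 q k (m+1) n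
noncomputable def Bf (q : ℝ) (r m n k : ℕ) : ℝ :=
  zeta q (r+1) (k+1) * (1 - q ^ ((k:ℤ) - ((m+1 : ℕ) : ℤ))) * zeta2 q k (m+1) n

lemma main_id (hq : 1 < q) : ∀ (n j i : ℕ), j ≤ i →
    ∑ k ∈ Finset.Icc j i, zeta q j k * zeta2 q k i n = zeta q j i * zeta q j n := by
  intro n
  induction n with
  | zero =>
    intro j i hji
    match j with
    | 0 =>
      rw [Finset.sum_eq_single_of_mem 0 (Finset.mem_Icc.mpr ⟨le_rfl, Nat.zero_le i⟩)
        (fun k _ hk => by rw [zeta2_eq_zero (Nat.pos_of_ne_zero hk), mul_zero])]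
      norm_num [zeta_zero, zeta2]
    | r+1 =>
      rw [Finset.sum_eq_zero, zeta_eq_zero (Nat.succ_pos r), mul_zero]
      intro k hk
      have : (0:ℕ) < k := by have := (Finset.mem_Icc.mp hk).1; omega
      rw [zeta2_eq_zero this, mul_zero]
  | succ n IH =>
    intro j i hji
    match j with
    | 0 =>
      have hIcc : Finset.Icc 0 i = Finset.range (i+1) := by
        rw [Finset.range_eq_Ico, Finset.Ico_add_one_right_eq_Icc]
      have IH0 : ∑ k ∈ Finset.range (i+1), zeta2 q k i n = 1 := by
        have := IH 0 i (Nat.zero_le i)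
        simpa [hIcc, zeta_zero] using this
      simp only [hIcc, zeta_zero, one_mul]
      calc ∑ k ∈ Finset.range (i+1), zeta2 q k i (n+1)
          = ∑ k ∈ Finset.range i, zeta2 q (k+1) i (n+1) + zeta2 q 0 i (n+1) :=
            Finset.sum_range_succ' _ i
        _ = ∑ k ∈ Finset.range i,
              (q ^ ((k:ℤ)+1-(i:ℤ)) * zeta2 q (k+1) i n
                + (1 - q ^ ((k:ℤ)-(i:ℤ))) * zeta2 q k i n)
            + q ^ (-(i:ℤ)) * zeta2 q 0 i n := by
            rw [zeta2_zero_left hq]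
            exact congrArg₂ _ (Finset.sum_congr rfl fun k _ => zeta2_rec hq k i n) rfl
        _ = (∑ k ∈ Finset.range i, q ^ ((k:ℤ)+1-(i:ℤ)) * zeta2 q (k+1) i n
              + q ^ (-(i:ℤ)) * zeta2 q 0 i n)
            + ∑ k ∈ Finset.range i, (1 - q ^ ((k:ℤ)-(i:ℤ))) * zeta2 q k i n := by
            rw [Finset.sum_add_distrib]; ring
        _ = ∑ k ∈ Finset.range (i+1), q ^ ((k:ℤ)-(i:ℤ)) * zeta2 q k i n
            + ∑ k ∈ Finset.range (i+1), (1 - q ^ ((k:ℤ)-(i:ℤ))) * zeta2 q k i n := by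
            congr 1
            · rw [Finset.sum_range_succ' (fun k => q ^ ((k:ℤ)-(i:ℤ)) * zeta2 q k i n) i]
              congr 1
              norm_num
            · rw [Finset.sum_range_succ]
              norm_num
        _ = ∑ k ∈ Finset.range (i+1), zeta2 q k i n := by
            rw [← Finset.sum_add_distrib]
            exact Finset.sum_congr rfl fun k _ => by ring
        _ = 1 := IH0
    | r+1 =>
      obtain ⟨m, rfl⟩ : ∃ m, i = m+1 := ⟨i-1, by omega⟩
      have hrm : r ≤ m := by omega
      have hmap : ∀ (F : ℕ → ℝ), ∑ k ∈ Finset.Icc (r+1) (m+1), F k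
          = ∑ k ∈ Finset.Icc r m, F (k+1) := by
        intro F
        rw [← Finset.map_add_right_Icc r m 1, Finset.sum_map]
        simp
      have C1 : ∀ k : ℕ, zeta q (r+1) (k+1) * zeta2 q (k+1) (m+1) (n+1)
          = Af q r m n (k+1) + Bf q r m n k := by
        intro k
        rw [Af, Bf, zeta2_rec hq k (m+1) n,
          show (((k+1:ℕ)):ℤ) = (k:ℤ)+1 by push_cast; ring]
        ring
      have hBtop : Bf q r m n (m+1) = 0 := by
        rw [Bf]
        simp
      have hsplitB : ∑ k ∈ Finset.Icc r m, Bf q r m n k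
          = Bf q r m n r + ∑ k ∈ Finset.Icc (r+1) (m+1), Bf q r m n k := by
        rw [Finset.Icc_eq_cons_Ioc hrm, Finset.sum_cons, ← Finset.Icc_add_one_left_eq_Ioc,
          Finset.sum_Icc_succ_top (by omega : r+1 ≤ m+1), hBtop, add_zero]
      have hAB : ∀ k, Af q r m n k + Bf q r m n k
          = q ^ (-(r:ℤ)-1) * (zeta q (r+1) k * zeta2 q k (m+1) n)
            + (1 - q ^ (-(r:ℤ)-1)) * (1 - q ^ ((r:ℤ)-((m+1:ℕ):ℤ)))
              * (zeta q r k * zeta2 q k (m+1) n) := by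
        intro k
        rw [Af, Bf]
        linear_combination (zeta2 q k (m+1) n) * id1 hq r k (m+1)
      have IH1 := IH (r+1) (m+1) hji
      have IH2 := IH r (m+1) (by omega)
      have hsplit2 : ∑ k ∈ Finset.Icc r (m+1), zeta q r k * zeta2 q k (m+1) n
          = zeta q r r * zeta2 q r (m+1) n
            + ∑ k ∈ Finset.Icc (r+1) (m+1), zeta q r k * zeta2 q k (m+1) n := by
        rw [Finset.Icc_eq_cons_Ioc (by omega : r ≤ m+1), Finset.sum_cons, Finset.Icc_add_one_left_eq_Ioc]
      calc ∑ k ∈ Finset.Icc (r+1) (m+1), zeta q (r+1) k * zeta2 q k (m+1) (n+1)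
          = ∑ k ∈ Finset.Icc r m, (Af q r m n (k+1) + Bf q r m n k) := by
            rw [hmap]; exact Finset.sum_congr rfl fun k _ => C1 k
        _ = ∑ k ∈ Finset.Icc (r+1) (m+1), Af q r m n k
            + ∑ k ∈ Finset.Icc r m, Bf q r m n k := by
            rw [Finset.sum_add_distrib, hmap (Af q r m n)]
        _ = ∑ k ∈ Finset.Icc (r+1) (m+1), (Af q r m n k + Bf q r m n k)
            + Bf q r m n r := by
            rw [hsplitB, Finset.sum_add_distrib]; ring
        _ = q ^ (-(r:ℤ)-1)
              * ∑ k ∈ Finset.Icc (r+1) (m+1), zeta q (r+1) k * zeta2 q k (m+1) n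
            + (1 - q ^ (-(r:ℤ)-1)) * (1 - q ^ ((r:ℤ)-((m+1:ℕ):ℤ)))
              * ∑ k ∈ Finset.Icc (r+1) (m+1), zeta q r k * zeta2 q k (m+1) n
            + Bf q r m n r := by
            rw [Finset.mul_sum, Finset.mul_sum, ← Finset.sum_add_distrib]
            congr 1
            exact Finset.sum_congr rfl fun k _ => hAB k
        _ = zeta q (r+1) (m+1) * zeta q (r+1) (n+1) := by
            have h2 : ∑ k ∈ Finset.Icc (r+1) (m+1), zeta q r k * zeta2 q k (m+1) n
                = zeta q r (m+1) * zeta q r n - zeta q r r * zeta2 q r (m+1) n := by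
              linear_combination IH2 - hsplit2
            rw [IH1, h2, Bf, zeta_succ' r r]
            linear_combination id2 hq r (m+1) n

lemma zeta2_diag (hq : 1 < q) (j n : ℕ) : zeta2 q j j n = zeta q j n := by
  have hZ : zeta q j j ≠ 0 := ne_of_gt (zeta_pos hq le_rfl)
  rw [zeta2, show ((n:ℤ)-j) * ((j:ℤ)-j) = 0 by ring, zpow_zero, mul_one,
    mul_div_assoc, div_self hZ, mul_one]

lemma sum_ext (hq : 1 < q) (k i t : ℕ) (f : ℕ → ℝ) :
    ∑ n ∈ Finset.Icc k t, f n * zeta2 q k i n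
      = ∑ n ∈ Finset.range (t+1), f n * zeta2 q k i n := by
  apply Finset.sum_subset
  · intro n hn
    have := (Finset.mem_Icc.mp hn).2
    exact Finset.mem_range.mpr (by omega)
  · intro n hn hn'
    have h1 : n < t + 1 := Finset.mem_range.mp hn
    have h2 : n < k := by
      by_contra h
      exact hn' (Finset.mem_Icc.mpr ⟨by omega, by omega⟩)
    rw [zeta2_eq_zero h2, mul_zero]

lemma sum_ext' (hq : 1 < q) (k t : ℕ) (f : ℕ → ℝ) :
    ∑ n ∈ Finset.Icc k t, f n * zeta q k n
      = ∑ n ∈ Finset.range (t+1), f n * zeta q k n := by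
  apply Finset.sum_subset
  · intro n hn
    have := (Finset.mem_Icc.mp hn).2
    exact Finset.mem_range.mpr (by omega)
  · intro n hn hn'
    have h1 : n < t + 1 := Finset.mem_range.mp hn
    have h2 : n < k := by
      by_contra h
      exact hn' (Finset.mem_Icc.mpr ⟨by omega, by omega⟩)
    rw [zeta_eq_zero h2, mul_zero]

lemma sum_f_eq_one (t : ℕ) (ε : ℝ) (f : ℕ → ℝ)
    (hf : ∀ n, f n = (t.choose n : ℝ) * (1 - ε) ^ n * ε ^ (t - n)) :
    ∑ n ∈ Finset.range (t+1), f n = 1 := by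
  have h := add_pow (1 - ε) ε t
  rw [sub_add_cancel, one_pow] at h
  calc ∑ n ∈ Finset.range (t+1), f n
      = ∑ n ∈ Finset.range (t+1), (1-ε)^n * ε^(t-n) * (t.choose n : ℝ) :=
        Finset.sum_congr rfl fun n _ => by rw [hf n]; ring
    _ = 1 := h.symm

/-- Eigendecomposition of the BATS rank transition matrix (Lemma 1).
Rows/columns are indexed `0, …, M` (so index `j : Fin (M+1)` corresponds to
the `(j+1)`-th row/column of the paper).  With
`f(n) = C(t,n)(1-ε)^n ε^{t-n}`,
`P_{m,j} = Σ_{n=j}^{t} f(n) ζ_j^{m,n}` for `j ≤ m` (and `0` above the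
diagonal), `Q_{i,j} = ζ_j^i` for `j ≤ i` (so `Q_{i,0} = 1`) and `0` above the
diagonal, and `Λ` diagonal with `λ_0 = 1`, `λ_j = Σ_{n=j}^{t} f(n) ζ_j^{j,n}`,
we have `P = Q Λ Q⁻¹`, equivalently `P Q = Q Λ` with `Q` invertible. -/
theorem bats_transition_eigendecomposition
    (q : ℝ) (hq : 1 < q) (M t : ℕ) (hM : 1 ≤ M) (ht : 1 ≤ t)
    (ε : ℝ) (hε : ε ∈ Set.Icc (0 : ℝ) 1)
    (f : ℕ → ℝ) (hf : ∀ n, f n = (t.choose n : ℝ) * (1 - ε) ^ n * ε ^ (t - n))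
    (P Q Λ : Matrix (Fin (M + 1)) (Fin (M + 1)) ℝ)
    (hP : ∀ i j : Fin (M + 1),
      P i j = if (j : ℕ) ≤ (i : ℕ) then
          ∑ n ∈ Finset.Icc (j : ℕ) t, f n * zeta2 q j i n
        else 0)
    (hQ : ∀ i j : Fin (M + 1),
      Q i j = if (i : ℕ) < (j : ℕ) then 0 else zeta q j i)
    (hΛ : Λ = Matrix.diagonal fun j : Fin (M + 1) =>
      if (j : ℕ) = 0 then 1
      else ∑ n ∈ Finset.Icc (j : ℕ) t, f n * zeta2 q j j n) :
    P = Q * Λ * Q⁻¹ ∧ P * Q = Q * Λ ∧ IsUnit Q := by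
  have hq0 : q ≠ 0 := by positivity
  -- Q is invertible
  have hQtri : Q.BlockTriangular OrderDual.toDual := by
    intro i j hij
    have : (i:ℕ) < (j:ℕ) := Fin.lt_def.mp (OrderDual.toDual_lt_toDual.mp hij)
    rw [hQ i j, if_pos this]
  have hdet : Q.det = ∏ i, Q i i := Matrix.det_of_lowerTriangular Q hQtri
  have hdet_ne : Q.det ≠ 0 := by
    rw [hdet]
    apply Finset.prod_ne_zero_iff.mpr
    intro i _
    rw [hQ i i, if_neg (lt_irrefl _)]
    exact ne_of_gt (zeta_pos hq le_rfl)
  have hQunit : IsUnit Q := (Matrix.isUnit_iff_isUnit_det Q).mpr (isUnit_iff_ne_zero.mpr hdet_ne)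
  have hlam : ∀ j : Fin (M+1), (if (j:ℕ) = 0 then (1:ℝ)
      else ∑ n ∈ Finset.Icc (j:ℕ) t, f n * zeta2 q j j n)
      = ∑ n ∈ Finset.range (t+1), f n * zeta q (j:ℕ) n := by
    intro j
    by_cases hj : (j:ℕ) = 0
    · rw [if_pos hj, hj,
        show ∑ n ∈ Finset.range (t+1), f n * zeta q 0 n = ∑ n ∈ Finset.range (t+1), f n from
          Finset.sum_congr rfl fun n _ => by rw [zeta_zero, mul_one]]
      exact (sum_f_eq_one t ε f hf).symm
    · rw [if_neg hj]
      calc ∑ n ∈ Finset.Icc (j:ℕ) t, f n * zeta2 q j j n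
          = ∑ n ∈ Finset.Icc (j:ℕ) t, f n * zeta q (j:ℕ) n :=
            Finset.sum_congr rfl fun n _ => by rw [zeta2_diag hq]
        _ = _ := sum_ext' hq j t f
  have hPQ : P * Q = Q * Λ := by
    ext i j
    rw [Matrix.mul_apply, hΛ, Matrix.mul_diagonal]
    by_cases hij : (j:ℕ) ≤ (i:ℕ)
    · have hQij : Q i j = zeta q (j:ℕ) (i:ℕ) := by rw [hQ i j, if_neg (by omega)]
      have hterm : ∀ k : Fin (M+1), P i k * Q k j
          = if (k:ℕ) ∈ Finset.Icc (j:ℕ) (i:ℕ) then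
              zeta q (j:ℕ) (k:ℕ) * ∑ n ∈ Finset.range (t+1), f n * zeta2 q (k:ℕ) (i:ℕ) n
            else 0 := by
        intro k
        rw [hP i k, hQ k j]
        by_cases h1 : (k:ℕ) ≤ (i:ℕ)
        · by_cases h2 : (j:ℕ) ≤ (k:ℕ)
          · rw [if_pos h1, if_neg (by omega : ¬ (k:ℕ) < (j:ℕ)),
              if_pos (Finset.mem_Icc.mpr ⟨h2, h1⟩), sum_ext hq k i t f]
            ring
          · rw [if_pos (by omega : (k:ℕ) < (j:ℕ)), mul_zero,
              if_neg (fun hc => h2 (Finset.mem_Icc.mp hc).1)]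
        · rw [if_neg h1, zero_mul, if_neg (fun hc => h1 (Finset.mem_Icc.mp hc).2)]
      have hss : Finset.range (M+1) ∩ Finset.Icc (j:ℕ) (i:ℕ) = Finset.Icc (j:ℕ) (i:ℕ) := by
        apply Finset.inter_eq_right.mpr
        intro k hk
        have h1 := (Finset.mem_Icc.mp hk).2
        have h2 := i.isLt
        exact Finset.mem_range.mpr (by omega)
      calc ∑ k : Fin (M+1), P i k * Q k j
          = ∑ k ∈ Finset.range (M+1), (fun kk : ℕ =>
              if kk ∈ Finset.Icc (j:ℕ) (i:ℕ) then
                zeta q (j:ℕ) kk * ∑ n ∈ Finset.range (t+1), f n * zeta2 q kk (i:ℕ) n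
              else 0) k := by
            rw [← Fin.sum_univ_eq_sum_range]
            exact Finset.sum_congr rfl fun k _ => hterm k
        _ = ∑ k ∈ Finset.Icc (j:ℕ) (i:ℕ),
              zeta q (j:ℕ) k * ∑ n ∈ Finset.range (t+1), f n * zeta2 q k (i:ℕ) n := by
            rw [Finset.sum_ite_mem, hss]
        _ = ∑ k ∈ Finset.Icc (j:ℕ) (i:ℕ), ∑ n ∈ Finset.range (t+1),
              f n * (zeta q (j:ℕ) k * zeta2 q k (i:ℕ) n) :=
            Finset.sum_congr rfl fun k _ => by
              rw [Finset.mul_sum]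
              exact Finset.sum_congr rfl fun n _ => by ring
        _ = ∑ n ∈ Finset.range (t+1), ∑ k ∈ Finset.Icc (j:ℕ) (i:ℕ),
              f n * (zeta q (j:ℕ) k * zeta2 q k (i:ℕ) n) := Finset.sum_comm
        _ = ∑ n ∈ Finset.range (t+1), f n * (zeta q (j:ℕ) (i:ℕ) * zeta q (j:ℕ) n) := by
            refine Finset.sum_congr rfl fun n _ => ?_
            rw [← Finset.mul_sum, main_id hq n j i hij]
        _ = Q i j * (if (j:ℕ) = 0 then 1
              else ∑ n ∈ Finset.Icc (j:ℕ) t, f n * zeta2 q j j n) := by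
            rw [hlam j, hQij, Finset.mul_sum]
            exact Finset.sum_congr rfl fun n _ => by ring
    · rw [Finset.sum_eq_zero, hQ i j, if_pos (by omega), zero_mul]
      intro k _
      by_cases h1 : (k:ℕ) ≤ (i:ℕ)
      · rw [hQ k j, if_pos (by omega), mul_zero]
      · rw [hP i k, if_neg h1, zero_mul]
  refine ⟨?_, hPQ, hQunit⟩
  have hinv : Q * Q⁻¹ = 1 := Matrix.mul_nonsing_inv Q (isUnit_iff_ne_zero.mpr hdet_ne)
  calc P = P * (Q * Q⁻¹) := by rw [hinv, Matrix.mul_one]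
    _ = P * Q * Q⁻¹ := by rw [Matrix.mul_assoc]
    _ = Q * Λ * Q⁻¹ := by rw [hPQ]
end

section
/- Let l ≥ 1 and M ≥ 1 be integers and let g : {1,...,M} × ℕ → [0,∞) and α_r β_r ≥ 0 be nonnegative reals for 1 ≤ r ≤ M. Define η'(t) = (Σ_{r=1}^{M} α_r β_r g(r,t)^l) / (l t) for positive integers t, and suppose t* maximizes η' over positive integers. Then for all positive integers t_1,...,t_l, (Σ_{r=1}^{M} α_r β_r ∏_{k=1}^{l} g(r,t_k)) / (Σ_{k=1}^{l} t_k) ≤ η'(t*). -/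
/-- AM–GM: for nonnegative `a : Fin l → ℝ`, `∏ a i ≤ (∑ a i ^ l) / l`. -/
lemma amgm_pow (l : ℕ) (hl : 1 ≤ l) (a : Fin l → ℝ) (ha : ∀ i, 0 ≤ a i) :
    ∏ i, a i ≤ (∑ i, a i ^ l) / l := by
  have hl0 : (0:ℝ) < l := by exact_mod_cast hl
  have h := Real.geom_mean_le_arith_mean_weighted Finset.univ
    (fun _ : Fin l => (l:ℝ)⁻¹) (fun i => a i ^ l)
    (fun i _ => inv_nonneg.2 hl0.le)
    (by simp [Finset.card_univ, mul_inv_cancel₀ hl0.ne'])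
    (fun i _ => pow_nonneg (ha i) l)
  have hLHS : ∀ i : Fin l, (a i ^ l) ^ ((l:ℝ)⁻¹) = a i := by
    intro i
    rw [← Real.rpow_natCast (a i) l, ← Real.rpow_mul (ha i),
      mul_inv_cancel₀ hl0.ne', Real.rpow_one]
  calc ∏ i, a i = ∏ i, (a i ^ l) ^ ((l:ℝ)⁻¹) := by
        exact (Finset.prod_congr rfl fun i _ => hLHS i).symm
    _ ≤ ∑ i, (l:ℝ)⁻¹ * a i ^ l := h
    _ = (∑ i, a i ^ l) / l := by
        rw [← Finset.mul_sum, inv_mul_eq_div]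

/-- Proposition 1 in abstract form: let `η'(t) = (Σ_{r=1}^M w_r g(r,t)^l)/(l t)`
with nonnegative weights `w_r = α_r β_r` and nonnegative `g`.  If `t*`
maximizes `η'` over positive integers, then for all positive integers
`t_1, …, t_l`,
`(Σ_{r=1}^M w_r ∏_{k=1}^l g(r, t_k)) / (Σ_{k=1}^l t_k) ≤ η'(t*)`. -/
theorem equal_allocation_optimal
    (l M : ℕ) (hl : 1 ≤ l) (hM : 1 ≤ M)
    (g : ℕ → ℕ → ℝ) (hg : ∀ r t, 0 ≤ g r t)
    (w : ℕ → ℝ) (hw : ∀ r, 0 ≤ w r)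
    (η' : ℕ → ℝ)
    (hη' : ∀ t, η' t = (∑ r ∈ Finset.Icc 1 M, w r * g r t ^ l) / (l * t))
    (tstar : ℕ) (htstar : 0 < tstar)
    (hmax : ∀ t : ℕ, 0 < t → η' t ≤ η' tstar) :
    ∀ t : Fin l → ℕ, (∀ k, 0 < t k) →
      (∑ r ∈ Finset.Icc 1 M, w r * ∏ k : Fin l, g r (t k)) /
          (∑ k : Fin l, (t k : ℝ)) ≤ η' tstar := by
  intro t ht
  have hl0 : (0:ℝ) < l := by exact_mod_cast hl
  have hS : (0:ℝ) < ∑ k : Fin l, (t k : ℝ) := by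
    have : Nonempty (Fin l) := ⟨⟨0, hl⟩⟩
    exact Finset.sum_pos (fun k _ => by exact_mod_cast ht k) Finset.univ_nonempty
  -- η'(tk) * tk = (Σ_r w_r g r (tk)^l) / l
  have key : ∀ k : Fin l,
      (∑ r ∈ Finset.Icc 1 M, w r * g r (t k) ^ l) / l = η' (t k) * t k := by
    intro k
    have htk : (0:ℝ) < t k := by exact_mod_cast ht k
    rw [hη']
    field_simp
  rw [div_le_iff₀ hS]
  calc (∑ r ∈ Finset.Icc 1 M, w r * ∏ k : Fin l, g r (t k))
      ≤ ∑ r ∈ Finset.Icc 1 M, w r * ((∑ k : Fin l, g r (t k) ^ l) / l) := by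
        refine Finset.sum_le_sum fun r _ => ?_
        exact mul_le_mul_of_nonneg_left
          (amgm_pow l hl (fun k => g r (t k)) (fun k => hg r (t k))) (hw r)
    _ = ∑ k : Fin l, (∑ r ∈ Finset.Icc 1 M, w r * g r (t k) ^ l) / l := by
        simp_rw [← mul_div_assoc, ← Finset.sum_div, Finset.mul_sum]
        rw [Finset.sum_comm]
    _ = ∑ k : Fin l, η' (t k) * t k := Finset.sum_congr rfl fun k _ => key k
    _ ≤ ∑ k : Fin l, η' tstar * t k := by
        refine Finset.sum_le_sum fun k _ => ?_
        exact mul_le_mul_of_nonneg_right (hmax _ (ht k)) (by positivity)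
    _ = η' tstar * ∑ k : Fin l, (t k : ℝ) := by rw [Finset.mul_sum]
end

section
/- Let q < q̂ be prime powers and let Φ be a totally random m×n matrix over F_q and Φ̂ a totally random m×n matrix over F_{q̂}. Then for every 1 ≤ r ≤ min(m,n), Pr{rank(Φ) ≥ r} < Pr{rank(Φ̂) ≥ r}, and equality Pr{rank(Φ) ≥ 0} = Pr{rank(Φ̂) ≥ 0} = 1 holds for r = 0. -/
open scoped Classical

open Matrix Module Submodule Set

set_option linter.unusedSectionVars false
set_option maxHeartbeats 1000000

section RankAux

variable {F : Type*} [Field F] [Fintype F] [DecidableEq F] {m n : ℕ}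

/-- The matrix obtained by prepending the column `v` to `B`. -/
def consCol (B : Matrix (Fin m) (Fin n) F) (v : Fin m → F) : Matrix (Fin m) (Fin (n+1)) F :=
  Matrix.of fun i j => Fin.cons (α := fun _ => F) (v i) (B i) j

lemma transpose_consCol (B : Matrix (Fin m) (Fin n) F) (v : Fin m → F) :
    (consCol B v)ᵀ = Matrix.of (Fin.cons (α := fun _ => Fin m → F) v (fun k => Bᵀ k)) := by
  funext j i
  refine Fin.cases ?_ (fun k => ?_) j <;> simp [consCol, Matrix.transpose_apply]

lemma range_cols_consCol (B : Matrix (Fin m) (Fin n) F) (v : Fin m → F) :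
    Set.range (consCol B v)ᵀ = insert v (Set.range Bᵀ) := by
  rw [transpose_consCol]
  show Set.range (Fin.cons v (fun k => Bᵀ k)) = _
  rw [Fin.range_cons]

lemma rank_consCol (B : Matrix (Fin m) (Fin n) F) (v : Fin m → F) :
    (consCol B v).rank = if v ∈ Submodule.span F (Set.range Bᵀ) then B.rank else B.rank + 1 := by
  rw [Matrix.rank_eq_finrank_span_cols, Matrix.rank_eq_finrank_span_cols]
  show finrank F (span F (range (consCol B v)ᵀ)) = if v ∈ span F (range Bᵀ) then finrank F (span F (range Bᵀ)) else finrank F (span F (range Bᵀ)) + 1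
  rw [range_cols_consCol]
  split
  · rename_i h
    rw [Submodule.span_insert_eq_span h]
  · rename_i h
    have hv0 : v ≠ 0 := fun h0 => h (h0 ▸ Submodule.zero_mem _)
    have hdisj : Submodule.span F {v} ⊓ Submodule.span F (Set.range Bᵀ) = ⊥ := by
      rw [eq_bot_iff]
      rintro x ⟨hx1, hx2⟩
      obtain ⟨c, rfl⟩ := Submodule.mem_span_singleton.mp hx1
      rcases eq_or_ne c 0 with rfl | hc
      · simp
      · exact absurd ((Submodule.smul_mem_iff _ hc).mp hx2) h
    have hkey := Submodule.finrank_sup_add_finrank_inf_eq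
      (Submodule.span F {v}) (Submodule.span F (Set.range Bᵀ))
    rw [hdisj, finrank_bot, finrank_span_singleton hv0] at hkey
    rw [Submodule.span_insert]
    omega

/-- The number of `m × n` matrices over `F` of rank at least `r`. -/
noncomputable def rkCount (F : Type*) [Field F] [Fintype F] (m n r : ℕ) : ℕ :=
  Nat.card {A : Matrix (Fin m) (Fin n) F // r ≤ A.rank}

lemma card_span_cols (B : Matrix (Fin m) (Fin n) F) :
    Fintype.card (Submodule.span F (Set.range Bᵀ)) = Fintype.card F ^ B.rank := by
  rw [Module.card_eq_pow_finrank (K := F), Matrix.rank_eq_finrank_span_cols]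
  rfl

lemma card_v (B : Matrix (Fin m) (Fin n) F) {r : ℕ} (hr : 1 ≤ r) :
    Fintype.card {v : Fin m → F // r ≤ (consCol B v).rank} =
      if r ≤ B.rank then Fintype.card F ^ m
      else if B.rank = r - 1 then Fintype.card F ^ m - Fintype.card F ^ (r-1)
      else 0 := by
  rcases le_or_gt r B.rank with h1 | h1
  · rw [if_pos h1]
    have hall : ∀ v : Fin m → F, r ≤ (consCol B v).rank := by
      intro v; rw [rank_consCol]; split <;> omega
    rw [Fintype.card_congr (Equiv.subtypeUnivEquiv hall)]
    simp [Fintype.card_fun]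
  · rw [if_neg (not_le.mpr h1)]
    rcases eq_or_ne B.rank (r-1) with h2 | h2
    · rw [if_pos h2]
      have hiff : ∀ v : Fin m → F,
          (r ≤ (consCol B v).rank) ↔ ¬ (v ∈ Submodule.span F (Set.range Bᵀ)) := by
        intro v; rw [rank_consCol]; split <;> rename_i hv
        · simp only [hv, not_true_eq_false, iff_false]; omega
        · simp only [hv, not_false_eq_true, iff_true]; omega
      rw [Fintype.card_congr (Equiv.subtypeEquivRight hiff),
        Fintype.card_subtype_compl]
      congr 1
      · simp [Fintype.card_fun]
      · rw [card_span_cols B, h2]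
    · rw [if_neg h2]
      rw [Fintype.card_eq_zero_iff]
      constructor
      rintro ⟨v, hv⟩
      rw [rank_consCol] at hv
      revert hv; split <;> omega

/-- Splitting a matrix into its first column and the rest. -/
def colSplit : Matrix (Fin m) (Fin (n+1)) F ≃ (Matrix (Fin m) (Fin n) F × (Fin m → F)) where
  toFun A := (Matrix.of fun i k => A i k.succ, fun i => A i 0)
  invFun p := consCol p.1 p.2
  left_inv A := by
    funext i j
    refine Fin.cases ?_ (fun k => ?_) j <;> simp [consCol]
  right_inv p := by
    refine Prod.ext ?_ ?_
    · funext i k; simp [consCol]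
    · funext i; simp [consCol]

lemma rkCount_succ_sum (r : ℕ) :
    rkCount F m (n+1) r = ∑ B : Matrix (Fin m) (Fin n) F,
      Fintype.card {v : Fin m → F // r ≤ (consCol B v).rank} := by
  rw [rkCount, Nat.card_eq_fintype_card]
  have h : ∀ A : Matrix (Fin m) (Fin (n+1)) F,
      r ≤ A.rank ↔ r ≤ (consCol (colSplit A).1 (colSplit A).2).rank := by
    intro A
    rw [show consCol (colSplit A).1 (colSplit A).2 = A from colSplit.left_inv A]
  rw [Fintype.card_congr ((colSplit.subtypeEquiv h).trans
    (Equiv.subtypeProdEquivSigmaSubtype (fun B v => r ≤ (consCol B v).rank))),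
    Fintype.card_sigma]

lemma rkCount_split {r : ℕ} (hr : 1 ≤ r) :
    rkCount F m n (r-1) =
      (Finset.univ.filter (fun B : Matrix (Fin m) (Fin n) F => B.rank = r-1)).card
        + rkCount F m n r := by
  rw [rkCount, rkCount, Nat.card_eq_fintype_card, Nat.card_eq_fintype_card,
    Fintype.card_subtype, Fintype.card_subtype]
  rw [show (Finset.univ.filter (fun B : Matrix (Fin m) (Fin n) F => r - 1 ≤ B.rank))
      = (Finset.univ.filter (fun B : Matrix (Fin m) (Fin n) F => B.rank = r-1))
        ∪ (Finset.univ.filter (fun B : Matrix (Fin m) (Fin n) F => r ≤ B.rank)) by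
    rw [← Finset.filter_or]
    exact Finset.filter_congr (fun B _ => by constructor <;> intro h <;> omega)]
  rw [Finset.card_union_of_disjoint]
  rw [Finset.disjoint_filter]
  intro B _ h
  omega

lemma one_le_cardF : 1 ≤ Fintype.card F := Fintype.card_pos

lemma rkCount_rec {r : ℕ} (hr : 1 ≤ r) (hrm : r ≤ m) :
    (rkCount F m (n+1) r : ℚ) =
      rkCount F m n r * (Fintype.card F : ℚ)^(r-1)
      + rkCount F m n (r-1) * ((Fintype.card F : ℚ)^m - (Fintype.card F : ℚ)^(r-1)) := by
  have hpown : Fintype.card F ^ (r-1) ≤ Fintype.card F ^ m :=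
    Nat.pow_le_pow_right one_le_cardF (by omega)
  have key := rkCount_succ_sum (F := F) (m := m) (n := n) r
  have hcast : (rkCount F m (n+1) r : ℚ) =
      ∑ B : Matrix (Fin m) (Fin n) F,
        ((if r ≤ B.rank then (Fintype.card F : ℚ)^m else 0)
          + (if B.rank = r-1 then ((Fintype.card F : ℚ)^m - (Fintype.card F : ℚ)^(r-1)) else 0)) := by
    rw [key]
    push_cast
    refine Finset.sum_congr rfl (fun B _ => ?_)
    rw [card_v B hr]
    rcases le_or_gt r B.rank with h1 | h1
    · rw [if_pos h1, if_pos h1, if_neg (by omega)]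
      push_cast; ring
    · rw [if_neg (not_le.mpr h1), if_neg (not_le.mpr h1)]
      rcases eq_or_ne B.rank (r-1) with h2 | h2
      · rw [if_pos h2, if_pos h2]
        push_cast [Nat.cast_sub hpown]
        ring
      · rw [if_neg h2, if_neg h2]
        simp
  rw [hcast, Finset.sum_add_distrib]
  rw [← Finset.sum_filter, ← Finset.sum_filter]
  rw [Finset.sum_const, Finset.sum_const]
  have h1 : (Finset.univ.filter (fun B : Matrix (Fin m) (Fin n) F => r ≤ B.rank)).card
      = rkCount F m n r := by
    rw [rkCount, Nat.card_eq_fintype_card, Fintype.card_subtype]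
  have h2 := rkCount_split (F := F) (m := m) (n := n) hr
  rw [h1]
  have h3 : ((Finset.univ.filter (fun B : Matrix (Fin m) (Fin n) F => B.rank = r-1)).card : ℚ)
      = (rkCount F m n (r-1) : ℚ) - rkCount F m n r := by
    rw [h2]; push_cast; ring
  rw [nsmul_eq_mul, nsmul_eq_mul, h3]
  ring

lemma card_matrix' : Fintype.card (Matrix (Fin m) (Fin n) F) = Fintype.card F ^ (m*n) := by
  show Fintype.card (Fin m → Fin n → F) = _
  simp [Fintype.card_fun, ← pow_mul]
  ring_nf

/-- The probability that a uniformly random `m × n` matrix over `F` has rank at least `r`. -/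
noncomputable def prob (F : Type*) [Field F] [Fintype F] (m n r : ℕ) : ℚ :=
  (rkCount F m n r : ℚ) / (Fintype.card F : ℚ)^(m*n)

lemma cardF_pos : (0:ℚ) < (Fintype.card F : ℚ) := by exact_mod_cast Fintype.card_pos

lemma rkCount_le {r : ℕ} : rkCount F m n r ≤ Fintype.card F ^ (m*n) := by
  rw [rkCount, Nat.card_eq_fintype_card, ← card_matrix']
  exact Fintype.card_subtype_le _

lemma prob_nonneg {r : ℕ} : 0 ≤ prob F m n r :=
  div_nonneg (by positivity) (by positivity)

lemma prob_zero : prob F m n 0 = 1 := by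
  rw [prob, div_eq_one_iff_eq (by positivity)]
  have : rkCount F m n 0 = Fintype.card (Matrix (Fin m) (Fin n) F) := by
    rw [rkCount, Nat.card_eq_fintype_card]
    exact Fintype.card_congr (Equiv.subtypeUnivEquiv (fun A => Nat.zero_le _))
  rw [this, card_matrix']
  push_cast
  ring

lemma prob_eq_zero_of_gt {r : ℕ} (h : m < r ∨ n < r) : prob F m n r = 0 := by
  rw [prob, div_eq_zero_iff]
  left
  norm_cast
  rw [rkCount, Nat.card_eq_fintype_card, Fintype.card_eq_zero_iff]
  constructor
  rintro ⟨A, hA⟩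
  have h1 : A.rank ≤ m := le_trans A.rank_le_card_height (by simp)
  have h2 : A.rank ≤ n := le_trans A.rank_le_card_width (by simp)
  omega

lemma prob_anti {r s : ℕ} (h : r ≤ s) : prob F m n s ≤ prob F m n r := by
  rw [prob, prob, div_le_div_iff_of_pos_right (by positivity)]
  have hn : rkCount F m n s ≤ rkCount F m n r := by
    rw [rkCount, rkCount, Nat.card_eq_fintype_card, Nat.card_eq_fintype_card]
    exact Fintype.card_subtype_mono _ _ (fun A hA => le_trans h hA)
  exact_mod_cast hn

lemma prob_one_lt_one : prob F m n 1 < 1 := by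
  rw [prob, div_lt_one (by positivity)]
  have : rkCount F m n 1 < Fintype.card (Matrix (Fin m) (Fin n) F) := by
    rw [rkCount, Nat.card_eq_fintype_card]
    exact Fintype.card_subtype_lt (x := 0) (by simp [Matrix.rank_zero])
  calc (rkCount F m n 1 : ℚ) < Fintype.card (Matrix (Fin m) (Fin n) F) := by exact_mod_cast this
  _ = _ := by rw [card_matrix']; push_cast; ring

lemma prob_rec {r : ℕ} (hr : 1 ≤ r) (hrm : r ≤ m) :
    prob F m (n+1) r = prob F m n r * ((Fintype.card F : ℚ)^(r-1) / (Fintype.card F : ℚ)^m)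
      + prob F m n (r-1) * (1 - (Fintype.card F : ℚ)^(r-1) / (Fintype.card F : ℚ)^m) := by
  have hq : (Fintype.card F : ℚ) ≠ 0 := ne_of_gt cardF_pos
  rw [prob, prob, prob, rkCount_rec hr hrm,
    show m*(n+1) = m*n + m by ring, pow_add]
  field_simp

end RankAux

lemma prob_strict_mono {F F' : Type*} [Field F] [Fintype F] [DecidableEq F]
    [Field F'] [Fintype F'] [DecidableEq F']
    (hq : Fintype.card F < Fintype.card F') (m : ℕ) :
    ∀ n r : ℕ, 1 ≤ r → r ≤ m → r ≤ n → prob F m n r < prob F' m n r := by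
  intro n
  induction n with
  | zero => intro r h1 _ h3; omega
  | succ n ih =>
    have weak : ∀ s, prob F m n s ≤ prob F' m n s := by
      intro s
      rcases Nat.eq_zero_or_pos s with rfl | hs
      · rw [prob_zero, prob_zero]
      · rcases le_or_gt s m with hsm | hsm
        · rcases le_or_gt s n with hsn | hsn
          · exact (ih s hs hsm hsn).le
          · rw [prob_eq_zero_of_gt (Or.inr hsn)]; exact prob_nonneg
        · rw [prob_eq_zero_of_gt (Or.inl hsm)]; exact prob_nonneg
    intro r hr1 hrm hrn
    rw [prob_rec hr1 hrm, prob_rec hr1 hrm]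
    set q : ℚ := (Fintype.card F : ℚ) with hqdef
    set q' : ℚ := (Fintype.card F' : ℚ) with hq'def
    have hq1 : (1:ℚ) ≤ q := by
      rw [hqdef]; exact_mod_cast Fintype.card_pos
    have hq1' : (1:ℚ) < q' := by
      rw [hq'def]; exact_mod_cast Fintype.one_lt_card
    have hqq' : q < q' := by rw [hqdef, hq'def]; exact_mod_cast hq
    set t : ℚ := q^(r-1)/q^m with htdef
    set t' : ℚ := q'^(r-1)/q'^m with ht'def
    have hq0 : (0:ℚ) < q := lt_of_lt_of_le one_pos hq1
    have hq0' : (0:ℚ) < q' := lt_trans one_pos hq1'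
    have htt' : t' < t := by
      rw [htdef, ht'def, div_lt_div_iff₀ (by positivity) (by positivity)]
      have e1 : q^(r-1) * q^(m-r+1) = q^m := by rw [← pow_add]; congr 1; omega
      have e1' : q'^(r-1) * q'^(m-r+1) = q'^m := by rw [← pow_add]; congr 1; omega
      rw [← e1, ← e1']
      have hple : q^(m-r+1) < q'^(m-r+1) := by
        apply pow_lt_pow_left₀ hqq' (le_of_lt hq0)
        omega
      calc q'^(r-1) * (q^(r-1) * q^(m-r+1)) = (q'^(r-1) * q^(r-1)) * q^(m-r+1) := by ring
      _ < (q'^(r-1) * q^(r-1)) * q'^(m-r+1) := by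
          apply mul_lt_mul_of_pos_left hple (by positivity)
      _ = q^(r-1) * (q'^(r-1) * q'^(m-r+1)) := by ring
    have ht'0 : 0 < t' := by rw [ht'def]; positivity
    have ht'1 : t' < 1 := by
      rw [ht'def, div_lt_one (by positivity)]
      apply pow_lt_pow_right₀ hq1'
      omega
    have hA : prob F m n r ≤ prob F' m n r := weak r
    have hB : prob F m n (r-1) ≤ prob F' m n (r-1) := weak (r-1)
    have hAB : prob F m n r ≤ prob F m n (r-1) := prob_anti (by omega)
    rcases eq_or_lt_of_le hr1 with hr1' | hr2
    · have hr1'' : r = 1 := hr1'.symm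
      subst hr1''
      simp only [Nat.sub_self, prob_zero] at *
      have hA1 : prob F m n 1 < 1 := prob_one_lt_one
      nlinarith [mul_lt_mul_of_pos_right hA1 (sub_pos.mpr htt'),
        mul_le_mul_of_nonneg_left hA (le_of_lt ht'0)]
    · have hBs : prob F m n (r-1) < prob F' m n (r-1) :=
        ih (r-1) (by omega) (by omega) (by omega)
      nlinarith [mul_le_mul_of_nonneg_left hA (le_of_lt ht'0),
        mul_lt_mul_of_pos_left hBs (sub_pos.mpr ht'1),
        mul_nonneg (sub_nonneg.mpr (le_of_lt htt'))
          (sub_nonneg.mpr hAB)]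

lemma ennreal_div_lt_div {a b c d : ℕ} (hb : 0 < b) (hd : 0 < d)
    (h : (a:ℚ)/(b:ℚ) < (c:ℚ)/(d:ℚ)) :
    (a : ENNReal)/(b : ENNReal) < (c : ENNReal)/(d : ENNReal) := by
  have hreal : (a:ℝ)/(b:ℝ) < (c:ℝ)/(d:ℝ) := by
    have := (Rat.cast_lt (K := ℝ)).mpr h
    push_cast at this
    exact this
  have h1 : (a : ENNReal)/(b : ENNReal) = ENNReal.ofReal ((a:ℝ)/(b:ℝ)) := by
    rw [ENNReal.ofReal_div_of_pos (by exact_mod_cast hb)]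
    simp [ENNReal.ofReal_natCast]
  have h2 : (c : ENNReal)/(d : ENNReal) = ENNReal.ofReal ((c:ℝ)/(d:ℝ)) := by
    rw [ENNReal.ofReal_div_of_pos (by exact_mod_cast hd)]
    simp [ENNReal.ofReal_natCast]
  rw [h1, h2]
  rw [ENNReal.ofReal_lt_ofReal_iff]
  · exact hreal
  · have h0 : (0:ℝ) ≤ (a:ℝ)/(b:ℝ) := by positivity
    linarith

lemma uniform_measure_setOf {α : Type*} [Fintype α] [Nonempty α] (p : α → Prop) :
    (PMF.uniformOfFintype α).toOuterMeasure {x | p x}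
      = (Nat.card {x // p x} : ENNReal) / (Fintype.card α : ENNReal) := by
  rw [PMF.toOuterMeasure_apply, tsum_fintype]
  have h : ∀ x : α, ({x | p x} : Set α).indicator (PMF.uniformOfFintype α) x
      = if p x then ((Fintype.card α : ENNReal))⁻¹ else 0 := by
    intro x
    rw [Set.indicator_apply]
    split <;> simp_all [PMF.uniformOfFintype_apply]
  simp_rw [h]
  rw [← Finset.sum_filter, Finset.sum_const, ← Fintype.card_subtype, ← Nat.card_eq_fintype_card]
  rw [nsmul_eq_mul, div_eq_mul_inv]

lemma uniform_measure_univ {α : Type*} [Fintype α] [Nonempty α] :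
    (PMF.uniformOfFintype α).toOuterMeasure Set.univ = 1 := by
  rw [PMF.toOuterMeasure_apply]
  simp only [Set.indicator_univ]
  exact (PMF.uniformOfFintype α).tsum_coe

/-- Lemma C.1: the rank of a uniformly random matrix is stochastically
strictly increasing in the field size.  If `q = |F| < |F̂| = q̂` and `Φ`, `Φ̂`
are totally random `m × n` matrices over `F`, `F̂` respectively, then
`Pr{rank Φ ≥ r} < Pr{rank Φ̂ ≥ r}` for all `1 ≤ r ≤ min m n`, while both
probabilities equal `1` for `r = 0`. -/
theorem rank_stochastically_increasing_in_field_size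
    {F F' : Type*} [Field F] [Fintype F] [DecidableEq F]
    [Field F'] [Fintype F'] [DecidableEq F']
    (hq : Fintype.card F < Fintype.card F') (m n : ℕ) :
    (∀ r : ℕ, 1 ≤ r → r ≤ min m n →
      (PMF.uniformOfFintype (Matrix (Fin m) (Fin n) F)).toOuterMeasure
          {A | r ≤ A.rank} <
        (PMF.uniformOfFintype (Matrix (Fin m) (Fin n) F')).toOuterMeasure
          {A | r ≤ A.rank}) ∧
    (PMF.uniformOfFintype (Matrix (Fin m) (Fin n) F)).toOuterMeasure
        {A | 0 ≤ A.rank} = 1 ∧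
    (PMF.uniformOfFintype (Matrix (Fin m) (Fin n) F')).toOuterMeasure
        {A | 0 ≤ A.rank} = 1 := by
  refine ⟨?_, ?_, ?_⟩
  · intro r hr1 hrmin
    rw [uniform_measure_setOf, uniform_measure_setOf, card_matrix', card_matrix']
    have hmono := prob_strict_mono hq m n r hr1
      (le_trans hrmin (min_le_left m n)) (le_trans hrmin (min_le_right m n))
    rw [prob, prob] at hmono
    have hL : Nat.card {A : Matrix (Fin m) (Fin n) F // r ≤ A.rank}
        = rkCount F m n r := rfl
    have hR : Nat.card {A : Matrix (Fin m) (Fin n) F' // r ≤ A.rank}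
        = rkCount F' m n r := rfl
    rw [hL, hR]
    apply ennreal_div_lt_div (by positivity) (by positivity)
    push_cast
    exact hmono
  · have hset : {A : Matrix (Fin m) (Fin n) F | 0 ≤ A.rank} = Set.univ := by
      ext A; simp
    rw [hset, uniform_measure_univ]
  · have hset : {A : Matrix (Fin m) (Fin n) F' | 0 ≤ A.rank} = Set.univ := by
      ext A; simp
    rw [hset, uniform_measure_univ]
end

section
/- Let q be a prime power, m ≥ 1, and n < n̂. Let Φ be a totally random m×n matrix and Φ̂ a totally random m×n̂ matrix over F_q. Then for every 1 ≤ r ≤ min(m,n̂), Pr{rank(Φ) ≥ r} ≤ Pr{rank(Φ̂) ≥ r}, with strict inequality for r ≥ 1 and equality for r = 0. -/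
open scoped Classical

open scoped ENNReal

set_option linter.unusedSectionVars false

section Aux

variable {F : Type*} [Field F] [Fintype F] [DecidableEq F]

private lemma card_matrix_aux (m k : ℕ) :
    Fintype.card (Matrix (Fin m) (Fin k) F) = Fintype.card F ^ (m * k) := by
  rw [Fintype.card_congr ((Matrix.of : (Fin m → Fin k → F) ≃ Matrix (Fin m) (Fin k) F)).symm]
  simp [Fintype.card_fun, ← pow_mul, Nat.mul_comm]

/-- Restriction to the first `n` columns does not increase the rank. -/
private lemma rank_restrict_le {m n k : ℕ} (A : Matrix (Fin m) (Fin (n + k)) F) :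
    (A.submatrix id (Fin.castAdd k)).rank ≤ A.rank := by
  have h : A.submatrix id (Fin.castAdd k)
      = A * (1 : Matrix (Fin (n + k)) (Fin (n + k)) F).submatrix (Equiv.refl _) (Fin.castAdd k) := by
    rw [Matrix.mul_submatrix_one]
    rfl
  rw [h]
  exact Matrix.rank_mul_le_left _ _

/-- Reassemble a matrix from its first `n` columns and last `k` columns. -/
private def assemble {m n k : ℕ} (B : Matrix (Fin m) (Fin n) F)
    (C : Matrix (Fin m) (Fin k) F) : Matrix (Fin m) (Fin (n + k)) F :=
  Matrix.of fun i j => if h : (j : ℕ) < n then B i ⟨j, h⟩ else C i ⟨(j : ℕ) - n, by omega⟩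

private lemma assemble_left {m n k : ℕ} (B : Matrix (Fin m) (Fin n) F)
    (C : Matrix (Fin m) (Fin k) F) :
    (assemble B C).submatrix id (Fin.castAdd k) = B := by
  ext i j
  simp only [assemble, Matrix.submatrix_apply, Matrix.of_apply, id_eq]
  rw [dif_pos (show ((Fin.castAdd k j : Fin (n + k)) : ℕ) < n by simp)]
  exact congrArg (B i) (Fin.ext (by simp))

private lemma assemble_eta {m n k : ℕ} (A : Matrix (Fin m) (Fin (n + k)) F) :
    assemble (A.submatrix id (Fin.castAdd k)) (A.submatrix id (Fin.natAdd n)) = A := by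
  ext i j
  simp only [assemble, Matrix.submatrix_apply, Matrix.of_apply, id_eq]
  split_ifs with h
  · exact congrArg (A i) (Fin.ext (by simp))
  · exact congrArg (A i) (Fin.ext (by simp only [Fin.coe_natAdd]; omega))

private lemma assemble_right {m n k : ℕ} (B : Matrix (Fin m) (Fin n) F)
    (C : Matrix (Fin m) (Fin k) F) :
    (assemble B C).submatrix id (Fin.natAdd n) = C := by
  ext i j
  simp only [assemble, Matrix.submatrix_apply, Matrix.of_apply, id_eq]
  rw [dif_neg (show ¬ ((Fin.natAdd n j : Fin (n + k)) : ℕ) < n by simp)]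
  exact congrArg (C i) (Fin.ext (by simp only [Fin.coe_natAdd]; omega))

/-- Fibre counting. -/
private lemma card_restrict (m n k : ℕ) (P : Matrix (Fin m) (Fin n) F → Prop) :
    Nat.card {A : Matrix (Fin m) (Fin (n + k)) F // P (A.submatrix id (Fin.castAdd k))}
      = Nat.card {B : Matrix (Fin m) (Fin n) F // P B} * Fintype.card F ^ (m * k) := by
  have e : {A : Matrix (Fin m) (Fin (n + k)) F // P (A.submatrix id (Fin.castAdd k))}
      ≃ {B : Matrix (Fin m) (Fin n) F // P B} × Matrix (Fin m) (Fin k) F :=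
    { toFun := fun A => (⟨A.1.submatrix id (Fin.castAdd k), A.2⟩, A.1.submatrix id (Fin.natAdd n))
      invFun := fun BC => ⟨assemble BC.1.1 BC.2, by rw [assemble_left]; exact BC.1.2⟩
      left_inv := fun A => by
        ext : 1
        exact assemble_eta A.1
      right_inv := fun BC => by
        refine Prod.ext (Subtype.ext ?_) ?_
        · exact assemble_left _ _
        · exact assemble_right _ _ }
  rw [Nat.card_congr e, Nat.card_prod,
    Nat.card_eq_fintype_card (α := Matrix (Fin m) (Fin k) F), card_matrix_aux]

/-- Strict monotonicity of counting under an implication with a witness. -/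
private lemma card_mono_strict {α : Type*} [Fintype α] (P Q : α → Prop)
    (h : ∀ a, P a → Q a) (w : α) (hw : Q w) (hw' : ¬ P w) :
    Nat.card {a // P a} < Nat.card {a // Q a} := by
  rw [Nat.card_eq_fintype_card, Nat.card_eq_fintype_card]
  refine Fintype.card_lt_of_injective_of_notMem
    (fun a => ⟨a.1, h a.1 a.2⟩) ?_ (b := ⟨w, hw⟩) ?_
  · intro x y hxy
    rw [Subtype.ext_iff]
    simpa using hxy
  rintro ⟨⟨A, hA⟩, hAeq⟩
  have : A = w := congrArg Subtype.val hAeq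
  subst this
  exact hw' hA

/-- The witness matrix: `1`s on the "diagonal" occupying the last `r` columns. -/
private def witness (m N r : ℕ) : Matrix (Fin m) (Fin N) F :=
  Matrix.of fun i j => if (i : ℕ) < r ∧ (j : ℕ) = N - r + (i : ℕ) then (1 : F) else 0

private lemma rank_witness_ge (m N r : ℕ) (hrm : r ≤ m) (hrN : r ≤ N) :
    r ≤ (witness (F := F) m N r).rank := by
  set L : Matrix (Fin r) (Fin m) F :=
    Matrix.of fun p i => if (i : ℕ) = (p : ℕ) then 1 else 0 with hL
  set R : Matrix (Fin N) (Fin r) F :=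
    Matrix.of fun j p => if (j : ℕ) = N - r + (p : ℕ) then 1 else 0 with hR
  have Lapp : ∀ (p : Fin r) (i : Fin m), L p i = if (i : ℕ) = (p : ℕ) then 1 else 0 :=
    fun _ _ => rfl
  have Rapp : ∀ (j : Fin N) (p : Fin r), R j p = if (j : ℕ) = N - r + (p : ℕ) then 1 else 0 :=
    fun _ _ => rfl
  have Wapp : ∀ (i : Fin m) (j : Fin N), witness (F := F) m N r i j
      = if (i : ℕ) < r ∧ (j : ℕ) = N - r + (i : ℕ) then 1 else 0 := fun _ _ => rfl
  have key : L * (witness (F := F) m N r * R) = (1 : Matrix (Fin r) (Fin r) F) := by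
    ext p q
    have hpm : (p : ℕ) < m := lt_of_lt_of_le p.isLt hrm
    have hqr : (q : ℕ) < r := q.isLt
    have hj0 : N - r + (q : ℕ) < N := by omega
    rw [Matrix.mul_apply, Finset.sum_eq_single (⟨(p : ℕ), hpm⟩ : Fin m)]
    · rw [Lapp, if_pos rfl, one_mul, Matrix.mul_apply,
        Finset.sum_eq_single (⟨N - r + (q : ℕ), hj0⟩ : Fin N)]
      · rw [Rapp, if_pos rfl, mul_one, Wapp]
        by_cases hpq : p = q
        · subst hpq
          rw [if_pos ⟨p.isLt, rfl⟩, Matrix.one_apply_eq]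
        · rw [if_neg, Matrix.one_apply_ne hpq]
          rintro ⟨-, hcon⟩
          simp only [Fin.val_mk] at hcon
          exact hpq (Fin.ext (by omega))
      · intro j _ hne
        rw [Rapp, if_neg (fun h => hne (Fin.ext h)), mul_zero]
      · intro h; exact absurd (Finset.mem_univ _) h
    · intro i _ hne
      rw [Lapp, if_neg (fun h => hne (Fin.ext h)), zero_mul]
    · intro h; exact absurd (Finset.mem_univ _) h
  calc r = (1 : Matrix (Fin r) (Fin r) F).rank := by simp
    _ = (L * (witness (F := F) m N r * R)).rank := by rw [key]
    _ ≤ (witness (F := F) m N r * R).rank := Matrix.rank_mul_le_right _ _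
    _ ≤ (witness (F := F) m N r).rank := Matrix.rank_mul_le_left _ _

private lemma rank_witness_restrict_lt (m n k r : ℕ) (hk : 1 ≤ k) (hr : 1 ≤ r)
    (hrN : r ≤ n + k) :
    ((witness (F := F) m (n + k) r).submatrix id (Fin.castAdd k)).rank < r := by
  set s : ℕ := n - (n + k - r) with hs
  set P : Matrix (Fin m) (Fin s) F :=
    Matrix.of fun i p => if (i : ℕ) = (p : ℕ) then 1 else 0 with hP
  set Q : Matrix (Fin s) (Fin n) F :=
    Matrix.of fun p j => if (j : ℕ) = n + k - r + (p : ℕ) then 1 else 0 with hQ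
  have Papp : ∀ (i : Fin m) (p : Fin s), P i p = if (i : ℕ) = (p : ℕ) then 1 else 0 :=
    fun _ _ => rfl
  have Qapp : ∀ (p : Fin s) (j : Fin n), Q p j = if (j : ℕ) = n + k - r + (p : ℕ) then 1 else 0 :=
    fun _ _ => rfl
  have key : (witness (F := F) m (n + k) r).submatrix id (Fin.castAdd k) = P * Q := by
    ext i j
    have hjn : (j : ℕ) < n := j.isLt
    have hW : (witness (F := F) m (n + k) r).submatrix id (Fin.castAdd k) i j
        = if (i : ℕ) < r ∧ (j : ℕ) = n + k - r + (i : ℕ) then 1 else 0 := rfl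
    rw [hW, Matrix.mul_apply]
    by_cases hc : (i : ℕ) < s ∧ (j : ℕ) = n + k - r + (i : ℕ)
    · obtain ⟨hc1, hc2⟩ := hc
      rw [Finset.sum_eq_single (⟨(i : ℕ), hc1⟩ : Fin s)]
      · rw [Papp, if_pos rfl, one_mul, Qapp, if_pos hc2, if_pos ⟨by omega, hc2⟩]
      · intro p _ hne
        rw [Papp, if_neg (fun h => hne (Fin.ext h.symm)), zero_mul]
      · intro h; exact absurd (Finset.mem_univ _) h
    · rw [Finset.sum_eq_zero, if_neg (fun hcon => hc ⟨by omega, hcon.2⟩)]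
      intro p _
      have hps : (p : ℕ) < s := p.isLt
      by_cases h : (i : ℕ) = (p : ℕ)
      · rw [Qapp, if_neg (fun h2 => hc ⟨by omega, by omega⟩), mul_zero]
      · rw [Papp, if_neg h, zero_mul]
  rw [key]
  calc (P * Q).rank ≤ P.rank := Matrix.rank_mul_le_left _ _
    _ ≤ Fintype.card (Fin s) := Matrix.rank_le_card_width _
    _ = s := Fintype.card_fin s
    _ < r := by omega

private lemma measure_val {α : Type*} [Fintype α] [Nonempty α] (p : α → Prop) :
    (PMF.uniformOfFintype α).toOuterMeasure {a | p a}
      = (Nat.card {a // p a} : ℝ≥0∞) / (Fintype.card α : ℝ≥0∞) := by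
  rw [PMF.toOuterMeasure_uniformOfFintype_apply]
  congr 1
  exact_mod_cast (Fintype.card_congr' rfl).trans Nat.card_eq_fintype_card.symm

end Aux

/-- Lemma C.2: the rank of a uniformly random matrix over `F_q` is
stochastically increasing in the number of columns.  If `n < n̂` then
`Pr{rank Φ ≥ r} < Pr{rank Φ̂ ≥ r}` for `1 ≤ r ≤ min m n̂`, with equality
(both probabilities equal to `1`) for `r = 0`. -/
theorem rank_stochastically_increasing_in_columns
    {F : Type*} [Field F] [Fintype F] [DecidableEq F]
    (m n n' : ℕ) (hm : 1 ≤ m) (hn : n < n') :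
    (∀ r : ℕ, 1 ≤ r → r ≤ min m n' →
      (PMF.uniformOfFintype (Matrix (Fin m) (Fin n) F)).toOuterMeasure
          {A | r ≤ A.rank} <
        (PMF.uniformOfFintype (Matrix (Fin m) (Fin n') F)).toOuterMeasure
          {A | r ≤ A.rank}) ∧
    (PMF.uniformOfFintype (Matrix (Fin m) (Fin n) F)).toOuterMeasure
        {A | 0 ≤ A.rank} =
      (PMF.uniformOfFintype (Matrix (Fin m) (Fin n') F)).toOuterMeasure
        {A | 0 ≤ A.rank} := by
  obtain ⟨k, rfl⟩ : ∃ k, n' = n + k := ⟨n' - n, by omega⟩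
  have hk : 1 ≤ k := by omega
  constructor
  · intro r hr1 hr2
    have hrm : r ≤ m := le_trans hr2 (min_le_left _ _)
    have hrN : r ≤ n + k := le_trans hr2 (min_le_right _ _)
    have hcount : Nat.card
        {A : Matrix (Fin m) (Fin (n + k)) F // r ≤ (A.submatrix id (Fin.castAdd k)).rank}
        = Nat.card {A : Matrix (Fin m) (Fin n) F // r ≤ A.rank} * Fintype.card F ^ (m * k) :=
      card_restrict m n k (fun B => r ≤ B.rank)
    have hlt : Nat.card
        {A : Matrix (Fin m) (Fin (n + k)) F // r ≤ (A.submatrix id (Fin.castAdd k)).rank}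
        < Nat.card {A : Matrix (Fin m) (Fin (n + k)) F // r ≤ A.rank} :=
      card_mono_strict _ _ (fun A hA => le_trans hA (rank_restrict_le A))
        (witness m (n + k) r) (rank_witness_ge m (n + k) r hrm hrN)
        (not_le.mpr (rank_witness_restrict_lt m n k r hk hr1 hrN))
    have hkey : Nat.card {A : Matrix (Fin m) (Fin n) F // r ≤ A.rank}
          * Fintype.card F ^ (m * k)
        < Nat.card {A : Matrix (Fin m) (Fin (n + k)) F // r ≤ A.rank} := hcount ▸ hlt
    rw [measure_val (fun A : Matrix (Fin m) (Fin n) F => r ≤ A.rank),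
      measure_val (fun A : Matrix (Fin m) (Fin (n + k)) F => r ≤ A.rank),
      card_matrix_aux, card_matrix_aux]
    set a : ℕ := Nat.card {A : Matrix (Fin m) (Fin n) F // r ≤ A.rank} with ha
    set b : ℕ := Nat.card {A : Matrix (Fin m) (Fin (n + k)) F // r ≤ A.rank} with hb
    rw [Nat.cast_pow, Nat.cast_pow]
    set q : ℝ≥0∞ := (Fintype.card F : ℝ≥0∞) with hq
    have hq0 : q ≠ 0 := by
      rw [hq]
      exact_mod_cast Fintype.card_ne_zero
    have hqt : q ≠ ⊤ := by
      rw [hq]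
      exact ENNReal.natCast_ne_top _
    have hpow0 : ∀ N : ℕ, q ^ N ≠ 0 := fun N => pow_ne_zero N hq0
    have hpowt : ∀ N : ℕ, q ^ N ≠ ⊤ := fun N => ENNReal.pow_ne_top hqt
    have hsplit : (a : ℝ≥0∞) / q ^ (m * n)
        = ((a * Fintype.card F ^ (m * k) : ℕ) : ℝ≥0∞) / q ^ (m * (n + k)) := by
      have hexp : q ^ (m * (n + k)) = q ^ (m * n) * q ^ (m * k) := by
        rw [← pow_add]; ring_nf
      rw [hexp]
      push_cast [hq]
      rw [ENNReal.mul_div_mul_right _ _ (hpow0 (m * k)) (hpowt (m * k))]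
    rw [hsplit, div_eq_mul_inv, div_eq_mul_inv,
      ENNReal.mul_lt_mul_iff_left (ENNReal.inv_ne_zero.mpr (hpowt (m * (n + k))))
        (ENNReal.inv_ne_top.mpr (hpow0 (m * (n + k))))]
    exact_mod_cast hkey
  · have h2 : {A : Matrix (Fin m) (Fin n) F | 0 ≤ A.rank} = Set.univ :=
      Set.eq_univ_of_forall fun A => Nat.zero_le _
    have h3 : {A : Matrix (Fin m) (Fin (n + k)) F | 0 ≤ A.rank} = Set.univ :=
      Set.eq_univ_of_forall fun A => Nat.zero_le _
    rw [h2, h3,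
      (PMF.toOuterMeasure_apply_eq_one_iff _ _).mpr (Set.subset_univ _),
      (PMF.toOuterMeasure_apply_eq_one_iff _ _).mpr (Set.subset_univ _)]
end

section
/- Let q > 1 be real and define the (M+1)×(M+1) matrices Q̃ (lower-triangular all-ones: Q̃_{ij} = 1 if i ≥ j, else 0) and let Λ̃ be diagonal with λ̃_1 = 1 and λ̃_j = Σ_{n=j-1}^{t} C(t,n)(1-ε)^n ε^{t-n} for 2 ≤ j ≤ M+1. Define P̃ by P̃_{i1} = ε^t for i ≥ 2, P̃_{11} = 1, P̃_{i,j} = C(t,j-1)(1-ε)^{j-1} ε^{t-j+1} for 2 ≤ j < i, P̃_{ii} = Σ_{n=i-1}^{t} C(t,n)(1-ε)^n ε^{t-n}, and 0 above the diagonal. Then P̃ = Q̃ Λ̃ Q̃^{-1}, where Q̃^{-1} is the bidiagonal difference matrix with 1 on the diagonal and -1 on the subdiagonal. -/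
open scoped Classical

/-- Key sum-telescoping helper. -/
lemma bats_sum_helper (M : ℕ) (i j : Fin (M + 1)) (lam : ℕ → ℝ) :
    (∑ k : Fin (M + 1),
      (if (k : ℕ) ≤ (i : ℕ) then (1 : ℝ) else 0) * lam (k : ℕ) *
        (if (k : ℕ) = (j : ℕ) then 1 else if (k : ℕ) = (j : ℕ) + 1 then -1 else 0))
      = (if (j : ℕ) ≤ (i : ℕ) then lam (j : ℕ) else 0)
        - (if (j : ℕ) + 1 ≤ (i : ℕ) then lam ((j : ℕ) + 1) else 0) := by
  have hrw : ∀ k : ℕ,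
      (if k ≤ (i : ℕ) then (1 : ℝ) else 0) * lam k *
        (if k = (j : ℕ) then 1 else if k = (j : ℕ) + 1 then -1 else 0)
      = (if k = (j : ℕ) then (if (j : ℕ) ≤ (i : ℕ) then lam (j : ℕ) else 0) else 0)
        + (if k = (j : ℕ) + 1 then
            -(if (j : ℕ) + 1 ≤ (i : ℕ) then lam ((j : ℕ) + 1) else 0) else 0) := by
    intro k
    rcases eq_or_ne k (j : ℕ) with hkj | hkj
    · subst hkj
      split_ifs <;> first | ring1 | (exfalso; omega)
    · rcases eq_or_ne k ((j : ℕ) + 1) with hk1 | hk1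
      · subst hk1
        split_ifs <;> first | ring1 | (exfalso; omega)
      · split_ifs <;> first | ring1 | (exfalso; omega)
  calc (∑ k : Fin (M + 1),
      (if (k : ℕ) ≤ (i : ℕ) then (1 : ℝ) else 0) * lam (k : ℕ) *
        (if (k : ℕ) = (j : ℕ) then 1 else if (k : ℕ) = (j : ℕ) + 1 then -1 else 0))
      = ∑ k ∈ Finset.range (M + 1),
        ((if k = (j : ℕ) then (if (j : ℕ) ≤ (i : ℕ) then lam (j : ℕ) else 0) else 0)
        + (if k = (j : ℕ) + 1 then
            -(if (j : ℕ) + 1 ≤ (i : ℕ) then lam ((j : ℕ) + 1) else 0) else 0)) := by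
        rw [← Fin.sum_univ_eq_sum_range]
        exact Finset.sum_congr rfl fun k _ => hrw (k : ℕ)
    _ = _ := by
        rw [Finset.sum_add_distrib, Finset.sum_ite_eq', Finset.sum_ite_eq']
        have hj : (j : ℕ) ∈ Finset.range (M + 1) := by
          simp [Nat.lt_succ_iff, Nat.lt_succ_iff.mp j.isLt]
        rw [if_pos hj]
        by_cases hjm : (j : ℕ) + 1 ∈ Finset.range (M + 1)
        · rw [if_pos hjm]; ring
        · rw [if_neg hjm]
          have : ¬ ((j : ℕ) + 1 ≤ (i : ℕ)) := by
            simp only [Finset.mem_range] at hjm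
            have := i.isLt; omega
          rw [if_neg this]; ring

/-- Eigendecomposition of the large-field-limit BATS transition matrix
(proof of Theorem 4).  Indices run over `0, …, M` (0-based versions of the
paper's 1-based indices).  With `f(n) = C(t,n)(1-ε)^n ε^{t-n}`:
`P̃_{0,0} = 1`, `P̃_{i,0} = ε^t` for `i ≥ 1`, `P̃_{i,j} = f(j)` for
`1 ≤ j < i`, `P̃_{i,i} = Σ_{n=i}^t f(n)`, and `0` above the diagonal;
`Q̃` is the lower-triangular all-ones matrix and `Λ̃` is diagonal with
`λ̃_0 = 1`, `λ̃_j = Σ_{n=j}^t f(n)`.  Then `P̃ = Q̃ Λ̃ Q̃⁻¹`, and `Q̃⁻¹` is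
the bidiagonal difference matrix `R`. -/
theorem bats_largefield_eigendecomposition
    (q : ℝ) (hq : 1 < q) (M t : ℕ) (hM : 1 ≤ M) (htM : M ≤ t) (ht : 1 ≤ t)
    (ε : ℝ) (hε : ε ∈ Set.Icc (0 : ℝ) 1)
    (f : ℕ → ℝ) (hf : ∀ n, f n = (t.choose n : ℝ) * (1 - ε) ^ n * ε ^ (t - n))
    (P Q Λ R : Matrix (Fin (M + 1)) (Fin (M + 1)) ℝ)
    (hP : ∀ i j : Fin (M + 1),
      P i j =
        if (i : ℕ) < (j : ℕ) then 0
        else if i = j then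
          (if (i : ℕ) = 0 then 1 else ∑ n ∈ Finset.Icc (i : ℕ) t, f n)
        else if (j : ℕ) = 0 then ε ^ t
        else f j)
    (hQ : ∀ i j : Fin (M + 1), Q i j = if (j : ℕ) ≤ (i : ℕ) then 1 else 0)
    (hΛ : Λ = Matrix.diagonal fun j : Fin (M + 1) =>
      if (j : ℕ) = 0 then 1 else ∑ n ∈ Finset.Icc (j : ℕ) t, f n)
    (hR : ∀ i j : Fin (M + 1),
      R i j = if i = j then 1 else if (i : ℕ) = (j : ℕ) + 1 then -1 else 0) :
    P = Q * Λ * Q⁻¹ ∧ Q⁻¹ = R := by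
  -- total sum of f over range (t+1)
  have htot : ∑ n ∈ Finset.range (t + 1), f n = 1 := by
    have expand : ∑ n ∈ Finset.range (t + 1), f n = ((1 - ε) + ε) ^ t := by
      rw [add_pow]
      exact Finset.sum_congr rfl fun n _ => by rw [hf n]; ring
    rw [expand, sub_add_cancel, one_pow]
  have hf0 : f 0 = ε ^ t := by simp [hf 0]
  set lam : ℕ → ℝ := fun j => if j = 0 then 1 else ∑ n ∈ Finset.Icc j t, f n with hlam
  have e0 : lam 0 = 1 := by simp [hlam]
  have eS : ∀ j : ℕ, j ≠ 0 → lam j = ∑ n ∈ Finset.Icc j t, f n := by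
    intro j h; simp [hlam, h]
  have hstep : ∀ j : ℕ, j < M → lam j - lam (j + 1) = f j := by
    intro j hj
    have hjt : j ≤ t := by omega
    have h1 : Finset.Icc (j + 1) t = Finset.Ioc j t := by
      ext x; simp only [Finset.mem_Icc, Finset.mem_Ioc]; omega
    have h3 : ∑ n ∈ Finset.Icc j t, f n = f j + ∑ n ∈ Finset.Ioc j t, f n := by
      rw [Finset.Icc_eq_cons_Ioc hjt, Finset.sum_cons]
    by_cases hj0 : j = 0
    · subst hj0
      have h2 : Finset.Icc 0 t = Finset.range (t + 1) := by
        ext x; simp [Nat.lt_succ_iff]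
      rw [h2, htot] at h3
      rw [e0, eS 1 one_ne_zero, h1]
      linarith
    · rw [eS j hj0, eS (j + 1) (Nat.succ_ne_zero j), h1]
      linarith
  -- Q * R = 1
  have hQR : Q * R = 1 := by
    ext i j
    rw [Matrix.mul_apply, Matrix.one_apply]
    have hterm : ∀ k : Fin (M + 1), Q i k * R k j =
        (if (k : ℕ) ≤ (i : ℕ) then (1 : ℝ) else 0) * (fun _ : ℕ => (1 : ℝ)) (k : ℕ) *
          (if (k : ℕ) = (j : ℕ) then 1 else if (k : ℕ) = (j : ℕ) + 1 then -1 else 0) := by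
      intro k
      rw [hQ, hR]
      simp only [Fin.ext_iff]
      ring
    rw [Finset.sum_congr rfl fun k _ => hterm k, bats_sum_helper M i j (fun _ => 1)]
    rcases lt_trichotomy (i : ℕ) (j : ℕ) with h | h | h
    · rw [if_neg (by omega), if_neg (by omega),
        if_neg (show ¬ i = j by rw [Fin.ext_iff]; omega)]
      ring
    · rw [if_pos (by omega : (j : ℕ) ≤ (i : ℕ)), if_neg (by omega),
        if_pos (show i = j from Fin.ext h)]
      norm_num
    · rw [if_pos (by omega : (j : ℕ) ≤ (i : ℕ)), if_pos (by omega : (j : ℕ) + 1 ≤ (i : ℕ)),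
        if_neg (show ¬ i = j by rw [Fin.ext_iff]; omega)]
      norm_num
  have hint : Q⁻¹ = R := Matrix.inv_eq_right_inv hQR
  refine ⟨?_, hint⟩
  rw [hint]
  ext i j
  rw [Matrix.mul_apply]
  have hQΛ : ∀ k : Fin (M + 1), (Q * Λ) i k = Q i k * lam (k : ℕ) := by
    intro k
    rw [hΛ, Matrix.mul_diagonal]
  have hterm : ∀ k : Fin (M + 1), (Q * Λ) i k * R k j =
      (if (k : ℕ) ≤ (i : ℕ) then (1 : ℝ) else 0) * lam (k : ℕ) *
        (if (k : ℕ) = (j : ℕ) then 1 else if (k : ℕ) = (j : ℕ) + 1 then -1 else 0) := by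
    intro k
    rw [hQΛ, hQ, hR]
    simp only [Fin.ext_iff]
  rw [Finset.sum_congr rfl fun k _ => hterm k, bats_sum_helper M i j lam, hP]
  rcases lt_trichotomy (i : ℕ) (j : ℕ) with h | h | h
  · rw [if_pos h, if_neg (show ¬ ((j : ℕ) ≤ (i : ℕ)) by omega),
      if_neg (show ¬ ((j : ℕ) + 1 ≤ (i : ℕ)) by omega)]
    ring
  · have hij : i = j := Fin.ext h
    rw [if_neg (show ¬ ((i : ℕ) < (j : ℕ)) by omega), if_pos hij,
      if_pos (show (j : ℕ) ≤ (i : ℕ) by omega),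
      if_neg (show ¬ ((j : ℕ) + 1 ≤ (i : ℕ)) by omega), sub_zero, h]
  · have hjM : (j : ℕ) < M := by have := i.isLt; omega
    rw [if_neg (show ¬ ((i : ℕ) < (j : ℕ)) by omega),
      if_neg (show ¬ i = j by rw [Fin.ext_iff]; omega),
      if_pos (show (j : ℕ) ≤ (i : ℕ) by omega),
      if_pos (show (j : ℕ) + 1 ≤ (i : ℕ) by omega), hstep (j : ℕ) hjM]
    by_cases hj0 : (j : ℕ) = 0
    · rw [if_pos hj0, hj0, hf0]
    · rw [if_neg hj0]
end
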